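/- arXiv:1603.06562 — 6 statements merged into one kernel-verified Lean document; each statement's English description precedes it below -/
import Mathlib

section
/- Let η : Q → P be a crossed module of Leibniz algebras. Then the semidirect product Q ⋊ P together with the maps s(q,p) = p and t(q,p) = η(q) + p is a cat¹-Leibniz algebra: s and t are Leibniz algebra homomorphisms restricting to the identity on P, and [Ker s, Ker t] = 0 = [Ker t, Ker s]. -/
/-- If `η : Q → P` is a crossed module of Leibniz algebras, then the semidirect product
`Q ⋊ P` with `s(q,p) = p` and `t(q,p) = η(q)+p` is a cat¹-Leibniz algebra: `s` and `t`
are Leibniz homomorphisms restricting to the identity on `P`, and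
`[Ker s, Ker t] = 0 = [Ker t, Ker s]`. -/
theorem crossed_module_gives_cat1 {K : Type*} [CommRing K]
    {P : Type*} [AddCommGroup P] [Module K P]
    {Q : Type*} [AddCommGroup Q] [Module K Q]
    (bP : P →ₗ[K] P →ₗ[K] P) (bQ : Q →ₗ[K] Q →ₗ[K] Q)
    (l : P →ₗ[K] Q →ₗ[K] Q) (r : Q →ₗ[K] P →ₗ[K] Q)
    (η : Q →ₗ[K] P)
    (leibP : ∀ x y z : P, bP (bP x y) z = bP x (bP y z) + bP (bP x z) y)
    (leibQ : ∀ x y z : Q, bQ (bQ x y) z = bQ x (bQ y z) + bQ (bQ x z) y)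
    -- action axioms
    (act1 : ∀ (q : Q) (p p' : P), r (r q p) p' = r q (bP p p') + r (r q p') p)
    (act2 : ∀ (p : P) (q : Q) (p' : P), r (l p q) p' = l p (r q p') + l (bP p p') q)
    (act3 : ∀ (p p' : P) (q : Q), l (bP p p') q = l p (l p' q) + r (l p q) p')
    (act4 : ∀ (q q' : Q) (p : P), r (bQ q q') p = bQ q (r q' p) + bQ (r q p) q')
    (act5 : ∀ (q : Q) (p : P) (q' : Q), bQ (r q p) q' = bQ q (l p q') + r (bQ q q') p)
    (act6 : ∀ (p : P) (q q' : Q), bQ (l p q) q' = l p (bQ q q') + bQ (l p q') q)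
    -- crossed module axioms: equivariance of η and Peiffer identities
    (heq1 : ∀ (p : P) (q : Q), η (l p q) = bP p (η q))
    (heq2 : ∀ (q : Q) (p : P), η (r q p) = bP (η q) p)
    (hpei1 : ∀ q₁ q₂ : Q, l (η q₁) q₂ = bQ q₁ q₂)
    (hpei2 : ∀ q₁ q₂ : Q, r q₁ (η q₂) = bQ q₁ q₂)
    -- the semidirect bracket, and the maps s and t
    (B : (Q × P) → (Q × P) → (Q × P))
    (hB : ∀ x y : Q × P, B x y = (bQ x.1 y.1 + l x.2 y.1 + r x.1 y.2, bP x.2 y.2))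
    (s t : (Q × P) → P)
    (hs : ∀ x : Q × P, s x = x.2)
    (ht : ∀ x : Q × P, t x = η x.1 + x.2) :
    -- s and t are Leibniz algebra homomorphisms
    (∀ x y : Q × P, s (B x y) = bP (s x) (s y))
    ∧ (∀ x y : Q × P, t (B x y) = bP (t x) (t y))
    -- they restrict to the identity on P
    ∧ (∀ p : P, s ((0 : Q), p) = p ∧ t ((0 : Q), p) = p)
    -- [Ker s, Ker t] = 0 = [Ker t, Ker s]
    ∧ (∀ x y : Q × P, s x = 0 → t y = 0 → B x y = 0)
    ∧ (∀ x y : Q × P, t x = 0 → s y = 0 → B x y = 0) := by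
  refine ⟨?_, ?_, ?_, ?_, ?_⟩
  · intro x y; simp [hs, hB]
  · intro x y
    rw [ht, ht, ht, hB]
    simp only [map_add, heq1 x.2 y.1, heq2 x.1 y.2]
    have : η (bQ x.1 y.1) = bP (η x.1) (η y.1) := by
      rw [← hpei1, heq1]
    rw [this]
    simp only [map_add, LinearMap.add_apply]
    abel
  · intro p; constructor
    · rw [hs]
    · rw [ht]; simp
  · intro x y hx hy
    rw [hs] at hx; rw [ht] at hy
    have hy2 : y.2 = -η y.1 := by linear_combination (norm := abel) hy
    rw [hB, hx, hy2]
    simp [hpei2]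
  · intro x y hx hy
    rw [ht] at hx; rw [hs] at hy
    have hx2 : x.2 = -η x.1 := by linear_combination (norm := abel) hx
    rw [hB, hx2, hy]
    simp [hpei1]
end

section
/- Conversely, given a cat¹-Leibniz algebra (P₁, P₀, s, t), the restriction t|_{Ker s} : Ker s → P₀, with the action of P₀ on Ker s induced by the bracket in P₁, is a crossed module of Leibniz algebras. -/
/-- Conversely, given a cat¹-Leibniz algebra `(P₁, P₀, s, t)`, the restriction
`t|_{Ker s} : Ker s → P₀`, with the action of `P₀` on `Ker s` induced by the bracket of
`P₁`, is a crossed module of Leibniz algebras. -/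
theorem cat1_gives_crossed_module {K : Type*} [CommRing K]
    {P₁ : Type*} [AddCommGroup P₁] [Module K P₁]
    (b : P₁ →ₗ[K] P₁ →ₗ[K] P₁)
    (leib : ∀ x y z : P₁, b (b x y) z = b x (b y z) + b (b x z) y)
    (P₀ : Submodule K P₁)
    (hP₀ : ∀ x ∈ P₀, ∀ y ∈ P₀, b x y ∈ P₀)
    (s t : P₁ →ₗ[K] P₁)
    (hs_mem : ∀ x, s x ∈ P₀) (ht_mem : ∀ x, t x ∈ P₀)
    (hs_hom : ∀ x y, s (b x y) = b (s x) (s y))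
    (ht_hom : ∀ x y, t (b x y) = b (t x) (t y))
    (hs_id : ∀ x ∈ P₀, s x = x) (ht_id : ∀ x ∈ P₀, t x = x)
    (hker₁ : ∀ x y, s x = 0 → t y = 0 → b x y = 0)
    (hker₂ : ∀ x y, t x = 0 → s y = 0 → b x y = 0) :
    -- Ker s is closed under the bracket action of P₀ (the action is well defined)
    (∀ p ∈ P₀, ∀ k, s k = 0 → s (b p k) = 0 ∧ s (b k p) = 0)
    -- t maps Ker s into P₀ and is equivariant for the induced action
    ∧ (∀ p ∈ P₀, ∀ k, s k = 0 → t (b p k) = b p (t k))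
    ∧ (∀ p ∈ P₀, ∀ k, s k = 0 → t (b k p) = b (t k) p)
    -- Peiffer identities on Ker s
    ∧ (∀ k₁ k₂, s k₁ = 0 → s k₂ = 0 → b (t k₁) k₂ = b k₁ k₂)
    ∧ (∀ k₁ k₂, s k₁ = 0 → s k₂ = 0 → b k₁ (t k₂) = b k₁ k₂) := by
  refine ⟨?_, ?_, ?_, ?_, ?_⟩
  · intro p hp k hk
    constructor
    · rw [hs_hom, hk, hs_id p hp]; simp
    · rw [hs_hom, hk, hs_id p hp]; simp
  · intro p hp k hk
    rw [ht_hom, ht_id p hp]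
  · intro p hp k hk
    rw [ht_hom, ht_id p hp]
  · intro k₁ k₂ h₁ h₂
    have key : b (t k₁ - k₁) k₂ = 0 := by
      apply hker₂
      · rw [map_sub, ht_id (t k₁) (ht_mem k₁), sub_self]
      · exact h₂
    have : b (t k₁) k₂ - b k₁ k₂ = 0 := by
      rw [← key]; simp [map_sub]
    exact sub_eq_zero.mp this
  · intro k₁ k₂ h₁ h₂
    have key : b k₁ (k₂ - t k₂) = 0 := by
      apply hker₁
      · exact h₁
      · rw [map_sub, ht_id (t k₂) (ht_mem k₂), sub_self]
    have : b k₁ k₂ - b k₁ (t k₂) = 0 := by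
      rw [← key]; simp [map_sub]
    exact (sub_eq_zero.mp this).symm
end

section
/- Let ρ : B → A be a crossed module of associative algebras. Then Ker σ · Ker τ = 0 = Ker τ · Ker σ in the semidirect product algebra B ⋊ A, where σ(b,a) = a and τ(b,a) = ρ(b) + a; thus (B ⋊ A, A, σ, τ) is a cat¹-algebra. -/
/-- If `ρ : B → A` is a crossed module of (non-unital) associative algebras, then in the
semidirect product algebra `B ⋊ A`, with `σ(b,a) = a` and `τ(b,a) = ρ(b)+a`, we have
`Ker σ · Ker τ = 0 = Ker τ · Ker σ`; thus `(B ⋊ A, A, σ, τ)` is a cat¹-algebra. -/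
theorem crossed_module_algebras_cat1 {K : Type*} [CommRing K]
    {A : Type*} [AddCommGroup A] [Module K A]
    {B : Type*} [AddCommGroup B] [Module K B]
    (mA : A →ₗ[K] A →ₗ[K] A) (mB : B →ₗ[K] B →ₗ[K] B)
    (l : A →ₗ[K] B →ₗ[K] B) (r : B →ₗ[K] A →ₗ[K] B)
    (ρ : B →ₗ[K] A)
    (hA_assoc : ∀ x y z : A, mA (mA x y) z = mA x (mA y z))
    (hB_assoc : ∀ x y z : B, mB (mB x y) z = mB x (mB y z))
    -- bimodule-type action axioms
    (h1 : ∀ (a a' : A) (b : B), l a (l a' b) = l (mA a a') b)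
    (h2 : ∀ (b : B) (a a' : A), r (r b a) a' = r b (mA a a'))
    (h3 : ∀ (a : A) (b : B) (a' : A), r (l a b) a' = l a (r b a'))
    (h4 : ∀ (a : A) (b b' : B), mB (l a b) b' = l a (mB b b'))
    (h5 : ∀ (b b' : B) (a : A), mB b (r b' a) = r (mB b b') a)
    (h6 : ∀ (b : B) (a : A) (b' : B), mB (r b a) b' = mB b (l a b'))
    -- crossed module axioms
    (hρ1 : ∀ (a : A) (b : B), ρ (l a b) = mA a (ρ b))
    (hρ2 : ∀ (b : B) (a : A), ρ (r b a) = mA (ρ b) a)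
    (hpei1 : ∀ b₁ b₂ : B, l (ρ b₁) b₂ = mB b₁ b₂)
    (hpei2 : ∀ b₁ b₂ : B, r b₁ (ρ b₂) = mB b₁ b₂)
    -- the semidirect product multiplication on B × A, and the maps σ, τ
    (mul : (B × A) → (B × A) → (B × A))
    (hmul : ∀ x y : B × A, mul x y = (mB x.1 y.1 + l x.2 y.1 + r x.1 y.2, mA x.2 y.2))
    (σ τ : (B × A) → A)
    (hσ : ∀ x : B × A, σ x = x.2)
    (hτ : ∀ x : B × A, τ x = ρ x.1 + x.2) :
    -- σ and τ are algebra homomorphisms restricting to the identity on A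
    (∀ x y : B × A, σ (mul x y) = mA (σ x) (σ y))
    ∧ (∀ x y : B × A, τ (mul x y) = mA (τ x) (τ y))
    ∧ (∀ a : A, σ ((0 : B), a) = a ∧ τ ((0 : B), a) = a)
    -- Ker σ · Ker τ = 0 = Ker τ · Ker σ
    ∧ (∀ x y : B × A, σ x = 0 → τ y = 0 → mul x y = 0)
    ∧ (∀ x y : B × A, τ x = 0 → σ y = 0 → mul x y = 0) := by
  have hρmul : ∀ b b' : B, ρ (mB b b') = mA (ρ b) (ρ b') := by
    intro b b'
    rw [← hpei1, hρ1]
  refine ⟨?_, ?_, ?_, ?_, ?_⟩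
  · intro x y
    simp [hσ, hmul]
  · intro x y
    simp only [hτ, hmul, map_add, hρmul, hρ1, hρ2]
    simp only [map_add, LinearMap.add_apply]
    abel
  · intro a
    simp [hσ, hτ]
  · intro x y hx hy
    rw [hσ] at hx
    rw [hτ] at hy
    have hy2 : y.2 = -ρ y.1 := by linear_combination (norm := abel) hy
    rw [hmul, hx, hy2]
    simp [hpei2]
  · intro x y hx hy
    rw [hσ] at hy
    rw [hτ] at hx
    have hx2 : x.2 = -ρ x.1 := by linear_combination (norm := abel) hx
    rw [hmul, hx2, hy]
    simp [hpei1]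
end

section
/- Let (Q,P,η) be a Leibniz crossed module with associated cat¹-Leibniz algebra (Q ⋊ P, P, s, t). Then the kernel of UL(s) : UL(Q ⋊ P) → UL(P) is generated as an ideal by the classes of tensors (q₁,p₁) ⊗ ⋯ ⊗ (q_k,p_k) (with each factor in the l- or r-copy) for which some p_i = 0. -/
open TensorAlgebra in
/-- The relations defining the universal enveloping algebra `UL(P)` of a Leibniz algebra:
the first component of `P × P` is the left copy `P^l` and the second the right copy `P^r`,
so `ι (x, 0) = x_l` and `ι (0, x) = x_r`. -/
def ulRel {K : Type*} [CommRing K] {P : Type*} [AddCommGroup P] [Module K P]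
    (br : P →ₗ[K] P →ₗ[K] P) :
    TensorAlgebra K (P × P) → TensorAlgebra K (P × P) → Prop := fun a c =>
  (∃ x y : P, a = ι K ((0 : P), br x y) ∧
      c = ι K ((0 : P), x) * ι K ((0 : P), y) - ι K ((0 : P), y) * ι K ((0 : P), x)) ∨
  (∃ x y : P, a = ι K (br x y, (0 : P)) ∧
      c = ι K (x, (0 : P)) * ι K ((0 : P), y) - ι K ((0 : P), y) * ι K (x, (0 : P))) ∨
  (∃ x y : P, a = (ι K ((0 : P), y) + ι K (y, (0 : P))) * ι K (x, (0 : P)) ∧ c = 0)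

/-- The universal enveloping algebra `UL(P)` of a Leibniz algebra `(P, br)`. -/
def UL {K : Type*} [CommRing K] {P : Type*} [AddCommGroup P] [Module K P]
    (br : P →ₗ[K] P →ₗ[K] P) : Type _ := RingQuot (ulRel br)

noncomputable instance {K : Type*} [CommRing K] {P : Type*} [AddCommGroup P] [Module K P]
    (br : P →ₗ[K] P →ₗ[K] P) : Ring (UL br) := by unfold UL; infer_instance

noncomputable instance {K : Type*} [CommRing K] {P : Type*} [AddCommGroup P] [Module K P]
    (br : P →ₗ[K] P →ₗ[K] P) : Algebra K (UL br) := by unfold UL; infer_instance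

/-- The canonical map of the tensor algebra on `P^l ⊕ P^r` onto `UL(P)`. -/
noncomputable def ulMk {K : Type*} [CommRing K] {P : Type*} [AddCommGroup P] [Module K P]
    (br : P →ₗ[K] P →ₗ[K] P) : TensorAlgebra K (P × P) →ₐ[K] UL br :=
  RingQuot.mkAlgHom K (ulRel br)

/-- Let `(Q,P,η)` be a Leibniz crossed module with associated cat¹-Leibniz algebra
`(Q ⋊ P, P, s, t)`.  Then the kernel of the induced map `UL(s) : UL(Q ⋊ P) → UL(P)` is
generated, as a two-sided ideal, by the classes of the pure tensors
`(q₁,p₁) ⊗ ⋯ ⊗ (q_k,p_k)` (each factor taken in the `l`- or `r`-copy) for which some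
`p_i = 0`. -/
theorem ker_ULs_generated_by_tensors_with_zero_component {K : Type*} [CommRing K]
    {P : Type*} [AddCommGroup P] [Module K P]
    {Q : Type*} [AddCommGroup Q] [Module K Q]
    (bP : P →ₗ[K] P →ₗ[K] P) (bQ : Q →ₗ[K] Q →ₗ[K] Q)
    (l : P →ₗ[K] Q →ₗ[K] Q) (r : Q →ₗ[K] P →ₗ[K] Q)
    (η : Q →ₗ[K] P)
    (leibP : ∀ x y z : P, bP (bP x y) z = bP x (bP y z) + bP (bP x z) y)
    (leibQ : ∀ x y z : Q, bQ (bQ x y) z = bQ x (bQ y z) + bQ (bQ x z) y)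
    (act1 : ∀ (q : Q) (p p' : P), r (r q p) p' = r q (bP p p') + r (r q p') p)
    (act2 : ∀ (p : P) (q : Q) (p' : P), r (l p q) p' = l p (r q p') + l (bP p p') q)
    (act3 : ∀ (p p' : P) (q : Q), l (bP p p') q = l p (l p' q) + r (l p q) p')
    (act4 : ∀ (q q' : Q) (p : P), r (bQ q q') p = bQ q (r q' p) + bQ (r q p) q')
    (act5 : ∀ (q : Q) (p : P) (q' : Q), bQ (r q p) q' = bQ q (l p q') + r (bQ q q') p)
    (act6 : ∀ (p : P) (q q' : Q), bQ (l p q) q' = l p (bQ q q') + bQ (l p q') q)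
    (heq1 : ∀ (p : P) (q : Q), η (l p q) = bP p (η q))
    (heq2 : ∀ (q : Q) (p : P), η (r q p) = bP (η q) p)
    (hpei1 : ∀ q₁ q₂ : Q, l (η q₁) q₂ = bQ q₁ q₂)
    (hpei2 : ∀ q₁ q₂ : Q, r q₁ (η q₂) = bQ q₁ q₂)
    -- the semidirect product bracket on Q ⋊ P
    (bsd : (Q × P) →ₗ[K] (Q × P) →ₗ[K] (Q × P))
    (hbsd : ∀ x y : Q × P, bsd x y = (bQ x.1 y.1 + l x.2 y.1 + r x.1 y.2, bP x.2 y.2))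
    -- the algebra map UL(s) induced by s(q,p) = p
    (ULs : UL bsd →ₐ[K] UL bP)
    (hULs_l : ∀ a : Q × P,
      ULs (ulMk bsd (TensorAlgebra.ι K (a, (0 : Q × P)))) =
        ulMk bP (TensorAlgebra.ι K (a.2, (0 : P))))
    (hULs_r : ∀ a : Q × P,
      ULs (ulMk bsd (TensorAlgebra.ι K ((0 : Q × P), a))) =
        ulMk bP (TensorAlgebra.ι K ((0 : P), a.2))) :
    {x : UL bsd | ULs x = 0} =
      (TwoSidedIdeal.span
        { u : UL bsd | ∃ L : List ((Q × P) × Bool),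
            (∃ i ∈ L, i.1.2 = (0 : P)) ∧
            u = (L.map fun i => ulMk bsd (TensorAlgebra.ι K
                  (if i.2 then (i.1, (0 : Q × P)) else ((0 : Q × P), i.1)))).prod } :
        Set (UL bsd)) := by
  classical
  set S : Set (UL bsd) :=
      { u : UL bsd | ∃ L : List ((Q × P) × Bool),
            (∃ i ∈ L, i.1.2 = (0 : P)) ∧
            u = (L.map fun i => ulMk bsd (TensorAlgebra.ι K
                  (if i.2 then (i.1, (0 : Q × P)) else ((0 : Q × P), i.1)))).prod } with hS
  set I : TwoSidedIdeal (UL bsd) := TwoSidedIdeal.span S with hIdef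
  -- generators membership
  have hgenl : ∀ q : Q,
      ulMk bsd (TensorAlgebra.ι K ((((q, (0 : P)) : Q × P), (0 : Q × P)))) ∈ I := by
    intro q
    apply TwoSidedIdeal.subset_span
    exact ⟨[(((q, 0) : Q × P), true)], ⟨((q, 0), true), by simp, rfl⟩, by simp⟩
  have hgenr : ∀ q : Q,
      ulMk bsd (TensorAlgebra.ι K (((0 : Q × P), ((q, (0 : P)) : Q × P)))) ∈ I := by
    intro q
    apply TwoSidedIdeal.subset_span
    exact ⟨[(((q, 0) : Q × P), false)], ⟨((q, 0), false), by simp, rfl⟩, by simp⟩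
  -- the section σ : UL bP →ₐ UL bsd induced by p ↦ (0, p)
  let emb : (P × P) →ₗ[K] ((Q × P) × (Q × P)) :=
    (LinearMap.inr K Q P).prodMap (LinearMap.inr K Q P)
  let f : TensorAlgebra K (P × P) →ₐ[K] UL bsd :=
    TensorAlgebra.lift K ((ulMk bsd).toLinearMap ∘ₗ (TensorAlgebra.ι K) ∘ₗ emb)
  have hfι : ∀ m : P × P, f (TensorAlgebra.ι K m)
      = ulMk bsd (TensorAlgebra.ι K ((((0 : Q), m.1), ((0 : Q), m.2)))) := by
    intro m
    simp only [f, TensorAlgebra.lift_ι_apply, LinearMap.coe_comp, Function.comp_apply,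
      LinearMap.prodMap_apply, LinearMap.coe_inr, AlgHom.toLinearMap_apply, emb]
  have hbsd0 : ∀ x y : P, bsd ((0 : Q), x) ((0 : Q), y) = (((0 : Q), bP x y) : Q × P) := by
    intro x y
    rw [hbsd]
    simp
  have hf : ∀ ⦃a c⦄, ulRel bP a c → f a = f c := by
    rintro a c (⟨x, y, rfl, rfl⟩ | ⟨x, y, rfl, rfl⟩ | ⟨x, y, rfl, rfl⟩)
    · have h1 := RingQuot.mkAlgHom_rel K (s := ulRel bsd)
        (Or.inl ⟨(((0 : Q), x) : Q × P), ((0 : Q), y), rfl, rfl⟩)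
      rw [hbsd0] at h1
      simp only [map_sub, map_mul] at h1
      simp only [map_sub, map_mul, hfι]
      exact h1
    · have h1 := RingQuot.mkAlgHom_rel K (s := ulRel bsd)
        (Or.inr (Or.inl ⟨(((0 : Q), x) : Q × P), ((0 : Q), y), rfl, rfl⟩))
      rw [hbsd0] at h1
      simp only [map_sub, map_mul] at h1
      simp only [map_sub, map_mul, hfι]
      exact h1
    · have h1 := RingQuot.mkAlgHom_rel K (s := ulRel bsd)
        (Or.inr (Or.inr ⟨(((0 : Q), x) : Q × P), ((0 : Q), y), rfl, rfl⟩))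
      simp only [map_mul, map_add, map_zero] at h1
      simp only [map_mul, map_add, map_zero, hfι]
      exact h1
  let σ : UL bP →ₐ[K] UL bsd := RingQuot.liftAlgHom K ⟨f, hf⟩
  have hσ : ∀ t : TensorAlgebra K (P × P), σ (ulMk bP t) = f t := fun t =>
    RingQuot.liftAlgHom_mkAlgHom_apply K f hf t
  have hσl : ∀ x : P,
      σ (ulMk bP (TensorAlgebra.ι K ((x, (0 : P))))) =
        ulMk bsd (TensorAlgebra.ι K ((((0 : Q), x) : Q × P), (0 : Q × P))) := by
    intro x
    rw [hσ, hfι]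
    rfl
  have hσr : ∀ x : P,
      σ (ulMk bP (TensorAlgebra.ι K (((0 : P), x)))) =
        ulMk bsd (TensorAlgebra.ι K ((0 : Q × P), (((0 : Q), x) : Q × P))) := by
    intro x
    rw [hσ, hfι]
    rfl
  -- the key computation
  have key : ∀ t : TensorAlgebra K ((Q × P) × (Q × P)),
      ulMk bsd t - σ (ULs (ulMk bsd t)) ∈ I := by
    intro t
    induction t using TensorAlgebra.induction with
    | algebraMap r =>
      simp only [AlgHom.commutes]
      rw [sub_self]
      exact I.zero_mem
    | ι m =>
      have e1 : (TensorAlgebra.ι K m : TensorAlgebra K ((Q × P) × (Q × P)))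
          = TensorAlgebra.ι K ((m.1, (0 : Q × P)))
            + TensorAlgebra.ι K (((0 : Q × P), m.2)) := by
        rw [← map_add]
        congr 1
        simp
      rw [e1, map_add, map_add, hULs_l, hULs_r, map_add, hσl, hσr]
      have d1 : ulMk bsd (TensorAlgebra.ι K ((m.1, (0 : Q × P))))
            - ulMk bsd (TensorAlgebra.ι K (((((0 : Q), m.1.2) : Q × P), (0 : Q × P))))
          = ulMk bsd (TensorAlgebra.ι K ((((m.1.1, (0 : P)) : Q × P), (0 : Q × P)))) := by
        rw [← map_sub, ← map_sub]
        congr 1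
        simp [Prod.ext_iff]
      have d2 : ulMk bsd (TensorAlgebra.ι K (((0 : Q × P), m.2)))
            - ulMk bsd (TensorAlgebra.ι K (((0 : Q × P), (((0 : Q), m.2.2) : Q × P))))
          = ulMk bsd (TensorAlgebra.ι K (((0 : Q × P), ((m.2.1, (0 : P)) : Q × P)))) := by
        rw [← map_sub, ← map_sub]
        congr 1
        simp [Prod.ext_iff]
      rw [add_sub_add_comm, d1, d2]
      exact I.add_mem (hgenl m.1.1) (hgenr m.2.1)
    | mul a b ha hb =>
      have e : ulMk bsd (a * b) - σ (ULs (ulMk bsd (a * b)))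
          = (ulMk bsd a - σ (ULs (ulMk bsd a))) * ulMk bsd b
            + σ (ULs (ulMk bsd a)) * (ulMk bsd b - σ (ULs (ulMk bsd b))) := by
        simp only [map_mul]
        noncomm_ring
      rw [e]
      exact I.add_mem (I.mul_mem_right _ _ ha) (I.mul_mem_left _ _ hb)
    | add a b ha hb =>
      have e : ulMk bsd (a + b) - σ (ULs (ulMk bsd (a + b)))
          = (ulMk bsd a - σ (ULs (ulMk bsd a))) + (ulMk bsd b - σ (ULs (ulMk bsd b))) := by
        simp only [map_add]
        abel
      rw [e]
      exact I.add_mem ha hb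
  -- the kernel as a two-sided ideal
  let J : TwoSidedIdeal (UL bsd) := TwoSidedIdeal.mk' {x : UL bsd | ULs x = 0}
    (map_zero ULs)
    (fun hx hy => by
      simp only [Set.mem_setOf_eq] at *
      rw [map_add, hx, hy, add_zero])
    (fun hx => by
      simp only [Set.mem_setOf_eq] at *
      rw [map_neg, hx, neg_zero])
    (fun hy => by
      simp only [Set.mem_setOf_eq] at *
      rw [map_mul, hy, mul_zero])
    (fun hx => by
      simp only [Set.mem_setOf_eq] at *
      rw [map_mul, hx, zero_mul])
  have hJ : ∀ x : UL bsd, x ∈ J ↔ ULs x = 0 := fun x =>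
    TwoSidedIdeal.mem_mk' _ _ _ _ _ _ x
  have hSJ : S ⊆ J := by
    rintro u ⟨L, ⟨i, hiL, hi0⟩, rfl⟩
    rw [SetLike.mem_coe, hJ, map_list_prod, List.map_map]
    apply List.prod_eq_zero
    refine List.mem_map.mpr ⟨i, hiL, ?_⟩
    rcases hb : i.2 with _ | _ <;>
      simp only [Function.comp_apply, hb, if_true, if_false, Bool.false_eq_true]
    · rw [hULs_r, hi0, show (((0 : P), (0 : P)) : P × P) = 0 from rfl, map_zero, map_zero]
    · rw [hULs_l, hi0, show (((0 : P), (0 : P)) : P × P) = 0 from rfl, map_zero, map_zero]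
  ext x
  simp only [Set.mem_setOf_eq, SetLike.mem_coe]
  constructor
  · intro hx
    obtain ⟨t, rfl⟩ := RingQuot.mkAlgHom_surjective K (ulRel bsd) x
    have h := key t
    rw [show (RingQuot.mkAlgHom K (ulRel bsd)) t = ulMk bsd t from rfl] at hx ⊢
    rw [hx, map_zero, sub_zero] at h
    exact h
  · intro hx
    exact (hJ x).mp (TwoSidedIdeal.mem_span_iff.mp hx J hSJ)
end

section
/- Let 𝔤 be a Lie algebra, M a right 𝔤-representation, and α : M → 𝔤 a 𝔤-equivariant map (a Lie algebra object in the Loday–Pirashvili category LM). Then the formulas g·(x ⊗ m) = gx ⊗ m and (x ⊗ m)·g = xg ⊗ m + x ⊗ [m,g] define a U(𝔤)-bimodule structure on U(𝔤) ⊗ M, where U(𝔤) is the universal enveloping algebra of 𝔤. -/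
/-!
Right multiplication by `ι g` on the first factor plus the right action on the second factor is an
anti-representation of `𝔤` on `U(𝔤) ⊗ M`: the commutator of the two operators for `g, g'` is the
operator for `⁅g', g⁆`, the cross terms cancelling and the rest being the representation identity of
`M`. By the universal property it extends uniquely to an algebra map out of `U(𝔤)ᵐᵒᵖ`. Left
multiplications commute with the generators, hence with the whole image since `U(𝔤)` is generated by
`𝔤`.
-/

open MulOpposite TensorProduct UniversalEnvelopingAlgebra

section

attribute [local instance 100] LieRing.ofAssociativeRing

variable {K : Type*} [CommRing K] {L : Type*} [LieRing L] [LieAlgebra K L]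

namespace UniversalEnvelopingAlgebra

variable {A : Type*} [Ring A] [Algebra K A]

theorem adjoin_range_ι :
    Algebra.adjoin K (Set.range (ι K : L → UniversalEnvelopingAlgebra K L)) = ⊤ :=
  calc Algebra.adjoin K (Set.range (ι K : L → UniversalEnvelopingAlgebra K L))
      = (Algebra.adjoin K (Set.range (TensorAlgebra.ι K))).map (mkAlgHom K L) := by
        rw [AlgHom.map_adjoin, ← Set.range_comp]; rfl
    _ = ⊤ := by
        rw [TensorAlgebra.adjoin_range_ι, Algebra.map_top, AlgHom.range_eq_top]
        exact RingCon.mk'_surjective _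

theorem commute_of_commute_ι (φ : UniversalEnvelopingAlgebra K L →ₐ[K] A) {a : A}
    (h : ∀ g, Commute a (φ (ι K g))) (u : UniversalEnvelopingAlgebra K L) :
    Commute a (φ u) := by
  have hu : u ∈ Algebra.adjoin K (Set.range (ι K : L → UniversalEnvelopingAlgebra K L)) := by
    rw [adjoin_range_ι]; trivial
  induction hu using Algebra.adjoin_induction with
  | mem x hx => obtain ⟨g, rfl⟩ := hx; exact h g
  | algebraMap r => rw [AlgHom.commutes]; exact Algebra.commute_algebraMap_right r a
  | add x y _ _ hx hy => rw [map_add]; exact hx.add_right hy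
  | mul x y _ _ hx hy => rw [map_mul]; exact hx.mul_right hy

noncomputable def liftOp (D : L →ₗ[K] A) (hD : ∀ g g', D ⁅g, g'⁆ = D g' * D g - D g * D g') :
    (UniversalEnvelopingAlgebra K L)ᵐᵒᵖ →ₐ[K] A :=
  AlgHom.opComm <| lift K
    { toLinearMap := (opLinearEquiv K).toLinearMap ∘ₗ D
      map_lie' := fun {g g'} => unop_injective <| by
        simp [LieRing.of_associative_ring_bracket, hD] }

theorem liftOp_op_ι (D : L →ₗ[K] A) (hD : ∀ g g', D ⁅g, g'⁆ = D g' * D g - D g * D g') (g : L) :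
    liftOp D hD (op (ι K g)) = D g := by
  simp only [liftOp, AlgHom.opComm_apply_apply, unop_op, lift_ι_apply]
  rfl

theorem opHom_ext {f₁ f₂ : (UniversalEnvelopingAlgebra K L)ᵐᵒᵖ →ₐ[K] A}
    (h : ∀ g, f₁ (op (ι K g)) = f₂ (op (ι K g))) : f₁ = f₂ :=
  AlgHom.opComm.symm.injective <| hom_ext (R := K) <| LieHom.ext fun g => congrArg op (h g)

theorem commute_of_commute_op_ι (f : (UniversalEnvelopingAlgebra K L)ᵐᵒᵖ →ₐ[K] A) {a : A}
    (h : ∀ g, Commute a (f (op (ι K g)))) (w : (UniversalEnvelopingAlgebra K L)ᵐᵒᵖ) :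
    Commute a (f w) :=
  (commute_of_commute_ι (AlgHom.opComm.symm f) (a := op a) (fun g => (h g).op) w.unop).unop

end UniversalEnvelopingAlgebra

variable {M : Type*} [AddCommGroup M] [Module K M]

noncomputable def tensorRightAction (ract : M →ₗ[K] L →ₗ[K] M) :
    L →ₗ[K] Module.End K (UniversalEnvelopingAlgebra K L ⊗[K] M) :=
  LinearMap.rTensorHom M ∘ₗ (LinearMap.mul K _).flip ∘ₗ (ι K : L →ₗ⁅K⁆ _).toLinearMap
    + LinearMap.lTensorHom _ ∘ₗ ract.flip

theorem tensorRightAction_tmul (ract : M →ₗ[K] L →ₗ[K] M) (g : L)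
    (x : UniversalEnvelopingAlgebra K L) (m : M) :
    tensorRightAction ract g (x ⊗ₜ m) = (x * ι K g) ⊗ₜ m + x ⊗ₜ ract m g :=
  rfl

theorem tensorRightAction_lie (ract : M →ₗ[K] L →ₗ[K] M)
    (hract : ∀ m g g', ract m ⁅g, g'⁆ = ract (ract m g) g' - ract (ract m g') g) (g g' : L) :
    tensorRightAction ract ⁅g, g'⁆ =
      tensorRightAction ract g' * tensorRightAction ract g
        - tensorRightAction ract g * tensorRightAction ract g' := by
  refine TensorProduct.ext' fun x m => ?_
  simp only [LinearMap.sub_apply, Module.End.mul_apply, tensorRightAction_tmul, map_add,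
    LieHom.map_lie, LieRing.of_associative_ring_bracket, hract, tmul_sub, mul_sub, sub_tmul,
    mul_assoc]
  abel

theorem commute_rTensor_mulLeft_tensorRightAction (ract : M →ₗ[K] L →ₗ[K] M)
    (u : UniversalEnvelopingAlgebra K L) (g : L) :
    Commute (LinearMap.rTensor M (LinearMap.mulLeft K u)) (tensorRightAction ract g) :=
  TensorProduct.ext' fun x m => by
    simp [tensorRightAction_tmul, mul_assoc]

end

theorem LM_lie_object_bimodule_general {K : Type*} [CommRing K]
    {L : Type*} [LieRing L] [LieAlgebra K L]
    {M : Type*} [AddCommGroup M] [Module K M]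
    (ract : M →ₗ[K] L →ₗ[K] M)
    (hract : ∀ (m : M) (g g' : L),
      ract m ⁅g, g'⁆ = ract (ract m g) g' - ract (ract m g') g) :
    ∃! ρ : (UniversalEnvelopingAlgebra K L)ᵐᵒᵖ →ₐ[K]
        Module.End K (UniversalEnvelopingAlgebra K L ⊗[K] M),
      (∀ (g : L) (x : UniversalEnvelopingAlgebra K L) (m : M),
        ρ (op (UniversalEnvelopingAlgebra.ι K g)) (x ⊗ₜ[K] m) =
          (x * UniversalEnvelopingAlgebra.ι K g) ⊗ₜ[K] m + x ⊗ₜ[K] ract m g)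
      ∧ (∀ (u : UniversalEnvelopingAlgebra K L)
          (w : (UniversalEnvelopingAlgebra K L)ᵐᵒᵖ),
          (ρ w) ∘ₗ LinearMap.rTensor M (LinearMap.mulLeft K u) =
            LinearMap.rTensor M (LinearMap.mulLeft K u) ∘ₗ (ρ w)) := by
  set ρ := liftOp (tensorRightAction ract) (tensorRightAction_lie ract hract)
  have hρ : ∀ g, ρ (op (ι K g)) = tensorRightAction ract g := liftOp_op_ι _ _
  refine ⟨ρ, ⟨fun g x m => by rw [hρ, tensorRightAction_tmul], fun u w => ?_⟩, fun ρ' hρ' => ?_⟩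
  · refine (commute_of_commute_op_ι ρ (fun g => ?_) w).eq.symm
    rw [hρ]
    exact commute_rTensor_mulLeft_tensorRightAction ract u g
  · refine opHom_ext (A := Module.End K (UniversalEnvelopingAlgebra K L ⊗[K] M)) fun g => ?_
    exact TensorProduct.ext' fun x m => by rw [hρ'.1, hρ, tensorRightAction_tmul]

open MulOpposite TensorProduct in
/-- Let `𝔤` be a Lie algebra, `M` a right `𝔤`-representation and `α : M → 𝔤` a
`𝔤`-equivariant map (a Lie algebra object in the Loday–Pirashvili category `LM`).
Then `g·(x ⊗ m) = gx ⊗ m` and `(x ⊗ m)·g = xg ⊗ m + x ⊗ [m,g]` define a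
`U(𝔤)`-bimodule structure on `U(𝔤) ⊗ M`: the right action extends (uniquely) to an
algebra map `U(𝔤)ᵐᵒᵖ → End(U(𝔤) ⊗ M)` commuting with the left multiplications. -/
theorem LM_lie_object_bimodule {K : Type*} [CommRing K]
    {L : Type*} [LieRing L] [LieAlgebra K L]
    {M : Type*} [AddCommGroup M] [Module K M]
    (ract : M →ₗ[K] L →ₗ[K] M)
    (hract : ∀ (m : M) (g g' : L),
      ract m ⁅g, g'⁆ = ract (ract m g) g' - ract (ract m g') g)
    (α : M →ₗ[K] L)
    (hα : ∀ (m : M) (g : L), α (ract m g) = ⁅α m, g⁆) :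
    ∃! ρ : (UniversalEnvelopingAlgebra K L)ᵐᵒᵖ →ₐ[K]
        Module.End K (UniversalEnvelopingAlgebra K L ⊗[K] M),
      (∀ (g : L) (x : UniversalEnvelopingAlgebra K L) (m : M),
        ρ (op (UniversalEnvelopingAlgebra.ι K g)) (x ⊗ₜ[K] m) =
          (x * UniversalEnvelopingAlgebra.ι K g) ⊗ₜ[K] m + x ⊗ₜ[K] ract m g)
      ∧ (∀ (u : UniversalEnvelopingAlgebra K L)
          (w : (UniversalEnvelopingAlgebra K L)ᵐᵒᵖ),
          (ρ w) ∘ₗ LinearMap.rTensor M (LinearMap.mulLeft K u) =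
            LinearMap.rTensor M (LinearMap.mulLeft K u) ∘ₗ (ρ w)) :=
  LM_lie_object_bimodule_general ract hract
end

section
/- Let (ϱ₁,ϱ₂) : (N,𝔥) → (M,𝔤) be a crossed module of Lie algebras in LM. Then N ⊕ M with bracket [(n,m),(h,g)] = ([n,h] + [n,g] + ξ(m,h), [m,g]) is a right module over the semidirect product Lie algebra 𝔥 ⋊ 𝔤, and β ⊕ α : N ⊕ M → 𝔥 ⋊ 𝔤 is equivariant, giving a Lie algebra object in LM. -/
/-- Let `(ϱ₁,ϱ₂) : (N,𝔥) → (M,𝔤)` be a crossed module of Lie algebras in the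
Loday–Pirashvili category `LM`.  Then `N ⊕ M` with
`[(n,m),(h,g)] = ([n,h] + [n,g] + ξ(m,h), [m,g])` is a right module over the semidirect
product Lie algebra `𝔥 ⋊ 𝔤`, and `β ⊕ α : N ⊕ M → 𝔥 ⋊ 𝔤` is equivariant, giving a Lie
algebra object in `LM`. -/
theorem LM_lie_crossed_module_semidirect {K : Type*} [CommRing K]
    {G : Type*} [AddCommGroup G] [Module K G]
    {H : Type*} [AddCommGroup H] [Module K H]
    {M : Type*} [AddCommGroup M] [Module K M]
    {N : Type*} [AddCommGroup N] [Module K N]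
    -- the Lie algebras 𝔤 and 𝔥
    (bG : G →ₗ[K] G →ₗ[K] G) (bH : H →ₗ[K] H →ₗ[K] H)
    (hG_alt : ∀ g : G, bG g g = 0)
    (hG_leib : ∀ x y z : G, bG (bG x y) z = bG x (bG y z) + bG (bG x z) y)
    (hH_alt : ∀ h : H, bH h h = 0)
    (hH_leib : ∀ x y z : H, bH (bH x y) z = bH x (bH y z) + bH (bH x z) y)
    -- the right action of 𝔤 on 𝔥 (by derivations)
    (aH : H →ₗ[K] G →ₗ[K] H)
    (haH_mod : ∀ (h : H) (g g' : G),
      aH h (bG g g') = aH (aH h g) g' - aH (aH h g') g)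
    (haH_der : ∀ (h h' : H) (g : G),
      aH (bH h h') g = bH (aH h g) h' + bH h (aH h' g))
    -- M is a right 𝔤-module and α : M → 𝔤 is 𝔤-equivariant
    (rM : M →ₗ[K] G →ₗ[K] M)
    (hrM : ∀ (m : M) (g g' : G),
      rM m (bG g g') = rM (rM m g) g' - rM (rM m g') g)
    (α : M →ₗ[K] G)
    (hα : ∀ (m : M) (g : G), α (rM m g) = bG (α m) g)
    -- N is a right 𝔥-module, compatibly a right 𝔤-module, and β : N → 𝔥 is equivariant
    (rNH : N →ₗ[K] H →ₗ[K] N) (rNG : N →ₗ[K] G →ₗ[K] N)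
    (hrNH : ∀ (n : N) (h h' : H),
      rNH n (bH h h') = rNH (rNH n h) h' - rNH (rNH n h') h)
    (hrNG : ∀ (n : N) (g g' : G),
      rNG n (bG g g') = rNG (rNG n g) g' - rNG (rNG n g') g)
    (hrN_compat : ∀ (n : N) (h : H) (g : G),
      rNH n (aH h g) = rNG (rNH n h) g - rNH (rNG n g) h)
    (β : N →ₗ[K] H)
    (hβH : ∀ (n : N) (h : H), β (rNH n h) = bH (β n) h)
    (hβG : ∀ (n : N) (g : G), β (rNG n g) = aH (β n) g)
    -- the structure map ξ : M ⊗ 𝔥 → N of the action of (M,𝔤) on (N,𝔥)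
    (ξ : M →ₗ[K] H →ₗ[K] N)
    (hξ1 : ∀ (m : M) (h : H) (g : G),
      rNG (ξ m h) g = ξ (rM m g) h + ξ m (aH h g))
    (hξ2 : ∀ (m : M) (h h' : H),
      ξ m (bH h h') = rNH (ξ m h) h' - rNH (ξ m h') h)
    (hβξ : ∀ (m : M) (h : H), β (ξ m h) = - aH h (α m))
    -- the crossed module structure (ϱ₁, ϱ₂)
    (ϱ₁ : N →ₗ[K] M) (ϱ₂ : H →ₗ[K] G)
    (harrow : ∀ n : N, ϱ₂ (β n) = α (ϱ₁ n))
    (hϱ₂_eq : ∀ (h : H) (g : G), ϱ₂ (aH h g) = bG (ϱ₂ h) g)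
    (hϱ₂_pei : ∀ h h' : H, aH h (ϱ₂ h') = bH h h')
    (hϱ₁_eq : ∀ (n : N) (g : G), ϱ₁ (rNG n g) = rM (ϱ₁ n) g)
    (hϱ₁_ξ : ∀ (m : M) (h : H), ϱ₁ (ξ m h) = rM m (ϱ₂ h))
    (hpei1 : ∀ (n : N) (h : H), rNH n h = ξ (ϱ₁ n) h)
    (hpei2 : ∀ (n : N) (h : H), rNH n h = rNG n (ϱ₂ h)) :
    -- N ⊕ M is a right module over the semidirect product 𝔥 ⋊ 𝔤
    (∀ (z : N × M) (x y : H × G),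
      (fun (w : N × M) (u : H × G) =>
          ((rNH w.1 u.1 + rNG w.1 u.2 + ξ w.2 u.1, rM w.2 u.2) : N × M)) z
        ((fun (u v : H × G) =>
          ((bH u.1 v.1 + aH u.1 v.2 - aH v.1 u.2, bG u.2 v.2) : H × G)) x y) =
      (fun (w : N × M) (u : H × G) =>
          ((rNH w.1 u.1 + rNG w.1 u.2 + ξ w.2 u.1, rM w.2 u.2) : N × M))
        ((fun (w : N × M) (u : H × G) =>
          ((rNH w.1 u.1 + rNG w.1 u.2 + ξ w.2 u.1, rM w.2 u.2) : N × M)) z x) y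
      - (fun (w : N × M) (u : H × G) =>
          ((rNH w.1 u.1 + rNG w.1 u.2 + ξ w.2 u.1, rM w.2 u.2) : N × M))
        ((fun (w : N × M) (u : H × G) =>
          ((rNH w.1 u.1 + rNG w.1 u.2 + ξ w.2 u.1, rM w.2 u.2) : N × M)) z y) x)
    -- and β ⊕ α is equivariant
    ∧ (∀ (z : N × M) (x : H × G),
        ((β (rNH z.1 x.1 + rNG z.1 x.2 + ξ z.2 x.1), α (rM z.2 x.2)) : H × G) =
          (fun (u v : H × G) =>
            ((bH u.1 v.1 + aH u.1 v.2 - aH v.1 u.2, bG u.2 v.2) : H × G))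
            (β z.1, α z.2) x) := by
  have hξ1' : ∀ (m : M) (h : H) (g : G),
      ξ m (aH h g) = rNG (ξ m h) g - ξ (rM m g) h := by
    intro m h g; rw [hξ1 m h g]; abel
  constructor
  · rintro ⟨n, m⟩ ⟨h, g⟩ ⟨h', g'⟩
    simp only [Prod.mk.injEq, Prod.mk_sub_mk]
    constructor
    · simp only [map_add, map_sub, hrNH, hrNG, hrN_compat, hξ2, hξ1', hrM, LinearMap.add_apply]
      abel
    · exact hrM m g g'
  · rintro ⟨n, m⟩ ⟨h, g⟩
    simp only [Prod.mk.injEq, map_add]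
    exact ⟨by rw [hβH, hβG, hβξ]; abel, hα m g⟩
end
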